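/- Let m and n be integers with m ≥ 1 and n ≥ m + 2, and let ρ, μ, ε be real numbers. Let I ⊆ ℝ be a nonempty open interval and let φ : ℝ → ℝ be twice continuously differentiable on I, positive on I, and nonconstant on I. If for all t ∈ I one has (n − m)·φ''(t) = (μ − ρ)·φ(t) and (φ'(t))² = ε − ((m·μ + (n − 2m)·ρ)/((n − m)·(n − m − 1)))·φ(t)², then for all t ∈ I one has (n − 1)·φ''(t) + ρ·φ(t) = 0 and (φ'(t))² = ε − (ρ/(n − 1))·φ(t)². -/

import Mathlib

/-!
Write `K` for the coefficient of `φ²` in (f2). Since `φ` is nonconstant on the interval, `φ'` does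
not vanish at some point `c`; differentiating (f2) there and cancelling `φ'(c)` gives
`φ''(c) = -K φ(c)`. Comparing with (f1) and cancelling `φ(c) > 0` gives `(n - m)(-K) = μ - ρ`,
which together with the definition of `K` is the relation `(n - 1) μ = (m - 1) ρ`, i.e.
`K = ρ / (n - 1)`. Then (f1) reads `φ'' = -K φ` on all of `I`, and both reduced equations follow.
-/

open Filter Topology

theorem IsOpen.exists_deriv_ne_zero_of_ne {𝕜 G : Type*} [RCLike 𝕜]
    [NormedAddCommGroup G] [NormedSpace 𝕜 G] {f : 𝕜 → G} {s : Set 𝕜} {x y : 𝕜}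
    (hs : IsOpen s) (hs' : IsPreconnected s) (hf : DifferentiableOn 𝕜 f s)
    (hx : x ∈ s) (hy : y ∈ s) (hxy : f x ≠ f y) : ∃ c ∈ s, deriv f c ≠ 0 := by
  by_contra! h
  exact hxy (hs.is_const_of_deriv_eq_zero hs' hf (fun c hc ↦ h c hc) hx hy)

theorem deriv_deriv_eq_of_sq_deriv_eq {φ : ℝ → ℝ} {c ε K : ℝ}
    (hφ : DifferentiableAt ℝ φ c) (hφ' : DifferentiableAt ℝ (deriv φ) c)
    (h : ∀ᶠ t in 𝓝 c, deriv φ t ^ 2 = ε - K * φ t ^ 2) (hc : deriv φ c ≠ 0) :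
    deriv (deriv φ) c = -K * φ c := by
  have hlhs : HasDerivAt (fun t ↦ deriv φ t ^ 2) (2 * deriv φ c * deriv (deriv φ) c) c := by
    simpa using hφ'.hasDerivAt.fun_pow 2
  have hrhs : HasDerivAt (fun t ↦ ε - K * φ t ^ 2) (-(K * (2 * φ c * deriv φ c))) c := by
    simpa using ((hφ.hasDerivAt.pow 2).const_mul K).const_sub ε
  have hderiv : 2 * deriv φ c * deriv (deriv φ) c = -(K * (2 * φ c * deriv φ c)) := by
    rw [← hlhs.deriv, ← hrhs.deriv, EventuallyEq.deriv_eq h]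
  refine mul_left_cancel₀ (mul_ne_zero two_ne_zero hc) ?_
  linear_combination hderiv

theorem warping_coeff_eq_div {m n ρ μ : ℝ} (hnm : n - m ≠ 0) (hnm1 : n - m - 1 ≠ 0)
    (hn1 : n - 1 ≠ 0)
    (h : (n - m) * -((m * μ + (n - 2 * m) * ρ) / ((n - m) * (n - m - 1))) = μ - ρ) :
    (m * μ + (n - 2 * m) * ρ) / ((n - m) * (n - m - 1)) = ρ / (n - 1) := by
  field_simp at h
  have hrel : (n - 1) * μ = (m - 1) * ρ := by linear_combination -h
  rw [div_eq_div_iff (mul_ne_zero hnm hnm1) hn1]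
  linear_combination m * hrel

theorem einstein_warping_reduced_equations_general
    (m n : ℤ) (hm : 1 ≤ m) (hn : m + 2 ≤ n) (ρ μ ε : ℝ)
    (I : Set ℝ) (hIopen : IsOpen I) (hIconn : I.OrdConnected)
    (φ : ℝ → ℝ) (hφ : ContDiffOn ℝ 2 φ I)
    (hpos : ∀ t ∈ I, 0 < φ t)
    (hnc : ∃ t₁ ∈ I, ∃ t₂ ∈ I, φ t₁ ≠ φ t₂)
    (hf1 : ∀ t ∈ I, ((n : ℝ) - m) * deriv (deriv φ) t = (μ - ρ) * φ t)
    (hf2 : ∀ t ∈ I, (deriv φ t) ^ 2 =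
      ε - ((m * μ + ((n : ℝ) - 2 * m) * ρ) / (((n : ℝ) - m) * ((n : ℝ) - m - 1)))
        * (φ t) ^ 2) :
    ∀ t ∈ I, ((n : ℝ) - 1) * deriv (deriv φ) t + ρ * φ t = 0 ∧
      (deriv φ t) ^ 2 = ε - (ρ / ((n : ℝ) - 1)) * (φ t) ^ 2 := by
  have hmr : (1 : ℝ) ≤ m := by exact_mod_cast hm
  have hnr : (m : ℝ) + 2 ≤ n := by exact_mod_cast hn
  have hnm : (n : ℝ) - m ≠ 0 := by linarith
  have hn1 : (n : ℝ) - 1 ≠ 0 := by linarith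
  have hφ₁ : DifferentiableOn ℝ φ I := hφ.differentiableOn (by norm_num)
  have hφ₂ : DifferentiableOn ℝ (deriv φ) I :=
    (hφ.deriv_of_isOpen (m := 1) hIopen (by norm_num)).differentiableOn (by norm_num)
  obtain ⟨t₁, ht₁, t₂, ht₂, hne⟩ := hnc
  obtain ⟨c, hcI, hc⟩ :=
    hIopen.exists_deriv_ne_zero_of_ne hIconn.isPreconnected hφ₁ ht₁ ht₂ hne
  have hcI' : I ∈ 𝓝 c := hIopen.mem_nhds hcI
  have hφ''c := deriv_deriv_eq_of_sq_deriv_eq (hφ₁.differentiableAt hcI')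
    (hφ₂.differentiableAt hcI') (eventually_of_mem hcI' hf2) hc
  set K := (m * μ + ((n : ℝ) - 2 * m) * ρ) / (((n : ℝ) - m) * ((n : ℝ) - m - 1))
  have hrel : ((n : ℝ) - m) * -K = μ - ρ :=
    mul_right_cancel₀ (hpos c hcI).ne' (by rw [← hf1 c hcI, hφ''c]; ring)
  have hK : K = ρ / ((n : ℝ) - 1) :=
    warping_coeff_eq_div hnm (by linarith) hn1 hrel
  intro t ht
  refine ⟨?_, by rw [hf2 t ht, hK]⟩
  have hφ''t : deriv (deriv φ) t = -K * φ t :=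
    mul_left_cancel₀ hnm (by rw [hf1 t ht, ← hrel]; ring)
  rw [hφ''t, hK]
  field_simp
  ring

/-- Reduction step in the proof of Proposition 2: the warping-function
equations (f1) and (f2) imply the reduced forms
(f1r): `(n − 1)·φ'' + ρ·φ = 0` and (f2r): `(φ')² = ε − (ρ/(n − 1))·φ²` on `I`. -/
theorem einstein_warping_reduced_equations
    (m n : ℤ) (hm : 1 ≤ m) (hn : m + 2 ≤ n) (ρ μ ε : ℝ)
    (I : Set ℝ) (hIopen : IsOpen I) (hIconn : I.OrdConnected) (hIne : I.Nonempty)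
    (φ : ℝ → ℝ) (hφ : ContDiffOn ℝ 2 φ I)
    (hpos : ∀ t ∈ I, 0 < φ t)
    (hnc : ∃ t₁ ∈ I, ∃ t₂ ∈ I, φ t₁ ≠ φ t₂)
    (hf1 : ∀ t ∈ I, ((n : ℝ) - m) * deriv (deriv φ) t = (μ - ρ) * φ t)
    (hf2 : ∀ t ∈ I, (deriv φ t) ^ 2 =
      ε - ((m * μ + ((n : ℝ) - 2 * m) * ρ) / (((n : ℝ) - m) * ((n : ℝ) - m - 1)))
        * (φ t) ^ 2) :
    ∀ t ∈ I, ((n : ℝ) - 1) * deriv (deriv φ) t + ρ * φ t = 0 ∧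
      (deriv φ t) ^ 2 = ε - (ρ / ((n : ℝ) - 1)) * (φ t) ^ 2 :=
  einstein_warping_reduced_equations_general m n hm hn ρ μ ε I hIopen hIconn φ hφ hpos hnc hf1 hf2
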